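/- arXiv:2605.06119 — 10 statements merged into one kernel-verified Lean document; each statement's English description precedes it below -/
import Mathlib

section
/- Let R be a finite nontrivial commutative ring. Then R is a D-ring if and only if R is a local ring. -/
/-!
In a finite, or more generally Artinian, commutative ring an element is a zero divisor exactly
when it is not a unit. Such a ring has Krull dimension zero, and a zero-dimensional ring is local
exactly when its nonunits are precisely its nilpotent elements.
-/

theorem IsArtinianRing.exists_ne_zero_mul_eq_zero_iff_not_isUnit {R : Type*} [CommRing R]
    [IsArtinianRing R] {z : R} : (∃ t, t ≠ 0 ∧ z * t = 0) ↔ ¬IsUnit z := by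
  simp [IsArtinianRing.isUnit_iff_mem_nonZeroDivisors, mem_nonZeroDivisors_iff_right, mul_comm z,
    and_comm]

theorem Ring.KrullDimLE.isLocalRing_iff_forall_not_isUnit_isNilpotent {R : Type*} [CommRing R]
    [Ring.KrullDimLE 0 R] [Nontrivial R] :
    IsLocalRing R ↔ ∀ x : R, ¬IsUnit x → IsNilpotent x :=
  calc IsLocalRing R ↔ Ring.KrullDimLE 0 R ∧ IsLocalRing R := (and_iff_right ‹_›).symm
    _ ↔ ∀ x : R, IsNilpotent x ↔ ¬IsUnit x := (Ring.krullDimLE_zero_and_isLocalRing_tfae R).out 0 2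
    _ ↔ ∀ x : R, ¬IsUnit x → IsNilpotent x :=
      forall_congr' fun _ ↦ ⟨Iff.mpr, fun h ↦ ⟨IsNilpotent.not_isUnit, h⟩⟩

/-- A finite nontrivial commutative ring is a D-ring
(every zero divisor is nilpotent) if and only if it is local. -/
theorem stmt_2 {R : Type*} [CommRing R] [Finite R] [Nontrivial R] :
    (∀ z : R, (∃ t : R, t ≠ 0 ∧ z * t = 0) → IsNilpotent z) ↔ IsLocalRing R := by
  simp only [IsArtinianRing.exists_ne_zero_mul_eq_zero_iff_not_isUnit,
    Ring.KrullDimLE.isLocalRing_iff_forall_not_isUnit_isNilpotent]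
end

section
/- Let R be a nontrivial commutative ring. Then R is a D-ring and a total ring of fractions if and only if R is a local ring whose maximal ideal coincides with its nilradical. -/
lemma aux_pow_zero {R : Type*} [CommRing R] [Nontrivial R] {a : R}
    (hreg : ∀ t : R, a * t = 0 → t = 0) : ∀ n : ℕ, a ^ n = 0 → False := by
  intro n
  induction n with
  | zero => simp
  | succ k ih =>
    intro h
    rw [pow_succ, mul_comm] at h
    exact ih (hreg _ h)

/-- A nontrivial commutative ring is a D-ring and a total ring of fractions
if and only if it is a local ring whose maximal ideal is the nilradical. -/
theorem stmt_3 {R : Type*} [CommRing R] [Nontrivial R] :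
    ((∀ z : R, (∃ t : R, t ≠ 0 ∧ z * t = 0) → IsNilpotent z) ∧
      (∀ a : R, (¬ ∃ t : R, t ≠ 0 ∧ a * t = 0) → IsUnit a)) ↔
    ∃ h : IsLocalRing R, @IsLocalRing.maximalIdeal R _ h = nilradical R := by
  constructor
  · rintro ⟨h1, h2⟩
    have key : ∀ a : R, ¬ IsUnit a ↔ IsNilpotent a := by
      intro a
      constructor
      · intro ha
        by_cases hz : ∃ t : R, t ≠ 0 ∧ a * t = 0
        · exact h1 a hz
        · exact absurd (h2 a hz) ha
      · intro ha hu
        exact hu.ne_zero (by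
          obtain ⟨n, hn⟩ := ha
          have := (hu.pow n).ne_zero
          exact absurd hn this)
    have hloc : IsLocalRing R := by
      apply IsLocalRing.of_nonunits_add
      intro a b ha hb
      rw [mem_nonunits_iff] at *
      rw [key] at *
      exact (Commute.all a b).isNilpotent_add ha hb
    refine ⟨hloc, ?_⟩
    ext x
    rw [IsLocalRing.mem_maximalIdeal, mem_nonunits_iff, mem_nilradical, key]
  · rintro ⟨hloc, hmax⟩
    constructor
    · rintro z ⟨t, ht, hzt⟩
      have hz : ¬ IsUnit z := by
        intro hu
        obtain ⟨u, rfl⟩ := hu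
        exact ht (by
          have : (↑u⁻¹ : R) * (↑u * t) = 0 := by rw [hzt, mul_zero]
          rwa [← mul_assoc, u.inv_mul, one_mul] at this)
      have : z ∈ nilradical R := by
        rw [← hmax, IsLocalRing.mem_maximalIdeal, mem_nonunits_iff]; exact hz
      exact mem_nilradical.mp this
    · intro a ha
      push_neg at ha
      have hreg : ∀ t : R, a * t = 0 → t = 0 := by
        intro t h
        by_contra hne
        exact ha t hne h
      by_contra hu
      have : a ∈ nilradical R := by
        rw [← hmax, IsLocalRing.mem_maximalIdeal, mem_nonunits_iff]; exact hu
      obtain ⟨n, hn⟩ := mem_nilradical.mp this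
      exact aux_pow_zero hreg n hn
end

section
/- Let M₁, …, Mₙ be commutative monoids, let M = M₁ × ⋯ × Mₙ, and let θ be a monoid automorphism of M with inverse θ⁻¹. Then for all indices i, j, k with i ≠ j and all m_j ∈ M_j, the element θ_{ik}((θ⁻¹)_{kj}(m_j)) is a unit of M_i, and likewise (θ⁻¹)_{ik}(θ_{kj}(m_j)) is a unit of M_i. -/
theorem MonoidHom.isUnit_map_mulSingle_of_map_eq_one {κ P : Type*} [Fintype κ] [DecidableEq κ]
    {N : κ → Type*} [∀ k, CommMonoid (N k)] [CommMonoid P] (f : (∀ k, N k) →* P)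
    {x : ∀ k, N k} (hx : f x = 1) (k : κ) : IsUnit (f (Pi.mulSingle k (x k))) := by
  have hprod : ∏ l, f (Pi.mulSingle l (x l)) = 1 := by
    rw [← map_prod, Finset.univ_prod_mulSingle, hx]
  exact .of_mul_eq_one _ ((Finset.mul_prod_erase _ _ (Finset.mem_univ k)).trans hprod)

/-- For a monoid automorphism `θ` of a finite direct product of commutative monoids
and indices `i ≠ j` and any `k`, the elements `θ_{ik}((θ⁻¹)_{kj}(m_j))` and
`(θ⁻¹)_{ik}(θ_{kj}(m_j))` are units of `M i`. -/
theorem stmt_8 {n : ℕ} {M : Fin n → Type*} [∀ i, CommMonoid (M i)]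
    (θ : ((i : Fin n) → M i) ≃* ((i : Fin n) → M i))
    (i j k : Fin n) (hij : i ≠ j) (m : M j) :
    IsUnit (θ (Pi.mulSingle k (θ.symm (Pi.mulSingle j m) k)) i) ∧
    IsUnit (θ.symm (Pi.mulSingle k (θ (Pi.mulSingle j m) k)) i) := by
  have key (φ : ((i : Fin n) → M i) ≃* ((i : Fin n) → M i)) :
      IsUnit (φ (Pi.mulSingle k (φ.symm (Pi.mulSingle j m) k)) i) :=
    ((Pi.evalMonoidHom M i).comp φ.toMonoidHom).isUnit_map_mulSingle_of_map_eq_one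
      (by simp [Pi.mulSingle_eq_of_ne hij]) k
  exact ⟨key θ, key θ.symm⟩
end

section
/- Let M₁, …, Mₙ be commutative monoids, let M = M₁ × ⋯ × Mₙ, let θ be a monoid automorphism of M with inverse θ⁻¹, and fix indices i ≠ j. If the diagonal component θ_{ii} is a monoid automorphism of M_i, then for every m_j ∈ M_j the element (θ⁻¹)_{ij}(m_j) is a unit of M_i; that is, (θ⁻¹)_{ij} is a homomorphism from M_j into the group of units of M_i. -/
/-! Apply `θ` to `x = θ⁻¹(ι_j m)` and read off coordinate `i`: since `i ≠ j` this gives `1`.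
Splitting `x = ι_i (x_i) · x'` with `x'_i = 1`, the coordinate becomes `θ_{ii}(x_i) · c = 1`
in the commutative monoid `M_i`, so `θ_{ii}(x_i)` is a unit, and hence so is `x_i` because
`θ_{ii}` is an isomorphism. -/

theorem Pi.mulSingle_mul_update_one {ι : Type*} [DecidableEq ι] {M : ι → Type*}
    [∀ k, MulOneClass (M k)] (x : ∀ k, M k) (i : ι) :
    Pi.mulSingle i (x i) * Function.update x i 1 = x := by
  ext k
  rcases eq_or_ne k i with rfl | hk
  · simp
  · simp [hk]

theorem MonoidHom.isUnit_map_mulSingle_apply {ι : Type*} [DecidableEq ι] {M : ι → Type*}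
    [∀ k, MulOneClass (M k)] {N : Type*} [CommMonoid N] (φ : (∀ k, M k) →* N)
    {x : ∀ k, M k} (hx : IsUnit (φ x)) (i : ι) : IsUnit (φ (Pi.mulSingle i (x i))) := by
  rw [← Pi.mulSingle_mul_update_one x i, map_mul] at hx
  exact isUnit_of_mul_isUnit_left hx

/-- For a monoid automorphism `θ` of a finite direct product of commutative monoids
and `i ≠ j`: if the diagonal component `θ_{ii}` is an automorphism of `M i`, then
`(θ⁻¹)_{ij}` takes values in the units of `M i`. -/
theorem stmt_9 {n : ℕ} {M : Fin n → Type*} [∀ i, CommMonoid (M i)]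
    (θ : ((i : Fin n) → M i) ≃* ((i : Fin n) → M i))
    (i j : Fin n) (hij : i ≠ j)
    (hii : Function.Bijective fun x : M i => θ (Pi.mulSingle i x) i) :
    ∀ m : M j, IsUnit (θ.symm (Pi.mulSingle j m) i) := by
  intro m
  set x := θ.symm (Pi.mulSingle j m)
  let θii : M i →* M i :=
    (Pi.evalMonoidHom M i).comp (θ.toMonoidHom.comp (MonoidHom.mulSingle M i))
  have hθx : IsUnit ((Pi.evalMonoidHom M i).comp θ.toMonoidHom x) := by
    simp [x, Pi.mulSingle_eq_of_ne hij]
  have hθii : IsUnit (θii (x i)) :=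
    ((Pi.evalMonoidHom M i).comp θ.toMonoidHom).isUnit_map_mulSingle_apply hθx i
  exact (isUnit_map_iff (MulEquiv.ofBijective θii hii) (x i)).mp hθii
end

section
/- Let R₁, …, Rₙ be commutative rings, let θ be an automorphism of the multiplicative monoid R₁ × ⋯ × Rₙ with inverse θ⁻¹, and let i, j, k be indices with i ≠ j. Then the compositions θ_{ik} ∘ (θ⁻¹)_{kj} and (θ⁻¹)_{ik} ∘ θ_{kj} are both equal to the trivial homomorphism from R_j to R_i (the constant map with value 1). -/
private lemma single_absorb {n : ℕ} {R : Fin n → Type*} [∀ i, Monoid (R i)]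
    (s f : ∀ i, R i) (h : s * f = f) (k : Fin n) :
    Pi.mulSingle k (s k) * f = f := by
  funext a
  by_cases hak : a = k
  · subst hak
    simpa using congrFun h a
  · simp [Pi.mulSingle_eq_of_ne hak]

private lemma single_zero_absorb {n : ℕ} {R : Fin n → Type*} [∀ i, CommRing (R i)]
    (j : Fin n) (m : R j) :
    Pi.mulSingle j m * Pi.mulSingle j (0 : R j) = Pi.mulSingle j (0 : R j) := by
  rw [← Pi.mulSingle_mul, mul_zero]

/-- For an automorphism `θ` of the multiplicative monoid of a finite direct product
of commutative rings and indices `i ≠ j` and any `k`, the compositions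
`θ_{ik} ∘ (θ⁻¹)_{kj}` and `(θ⁻¹)_{ik} ∘ θ_{kj}` are the trivial homomorphism. -/
theorem stmt_13 {n : ℕ} {R : Fin n → Type*} [∀ i, CommRing (R i)]
    (θ : ((i : Fin n) → R i) ≃* ((i : Fin n) → R i))
    (i j k : Fin n) (hij : i ≠ j) :
    (∀ m : R j, θ (Pi.mulSingle k (θ.symm (Pi.mulSingle j m) k)) i = 1) ∧
    (∀ m : R j, θ.symm (Pi.mulSingle k (θ (Pi.mulSingle j m) k)) i = 1) := by
  constructor
  · intro m
    have h1 : θ.symm (Pi.mulSingle j m) * θ.symm (Pi.mulSingle j (0 : R j))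
        = θ.symm (Pi.mulSingle j (0 : R j)) := by
      rw [← map_mul, single_zero_absorb]
    have h2 := single_absorb _ _ h1 k
    have h3 : θ (Pi.mulSingle k (θ.symm (Pi.mulSingle j m) k)) * Pi.mulSingle j (0 : R j)
        = Pi.mulSingle j (0 : R j) := by
      have := congrArg θ h2
      simpa [map_mul] using this
    have h4 := congrFun h3 i
    simpa [Pi.mulSingle_eq_of_ne hij] using h4
  · intro m
    have h1 : θ (Pi.mulSingle j m) * θ (Pi.mulSingle j (0 : R j))
        = θ (Pi.mulSingle j (0 : R j)) := by
      rw [← map_mul, single_zero_absorb]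
    have h2 := single_absorb _ _ h1 k
    have h3 : θ.symm (Pi.mulSingle k (θ (Pi.mulSingle j m) k)) * Pi.mulSingle j (0 : R j)
        = Pi.mulSingle j (0 : R j) := by
      have := congrArg θ.symm h2
      simpa [map_mul] using this
    have h4 := congrFun h3 i
    simpa [Pi.mulSingle_eq_of_ne hij] using h4
end

section
/- Let R₁, …, Rₙ be nontrivial commutative rings, each a D-ring and a total ring of fractions, and let θ be an automorphism of the multiplicative monoid R₁ × ⋯ × Rₙ with inverse θ⁻¹. Then for each index r there exist indices c and d such that (θ⁻¹)_{c r}(0) = 0 and θ_{r c}(0) = 0, and θ_{d r}(0) = 0 and (θ⁻¹)_{r d}(0) = 0. -/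
/-- In a nontrivial ring where zero divisors are nilpotent, idempotents are 0 or 1. -/
lemma idem01_aux {S : Type*} [CommRing S] [Nontrivial S]
    (hD : ∀ z : S, (∃ t : S, t ≠ 0 ∧ z * t = 0) → IsNilpotent z)
    {e : S} (he : e * e = e) : e = 0 ∨ e = 1 := by
  by_cases h1 : e = 1
  · exact Or.inr h1
  · left
    have hnil : IsNilpotent e :=
      hD e ⟨e - 1, sub_ne_zero.mpr h1, by rw [mul_sub, mul_one, he, sub_self]⟩
    obtain ⟨m, hm⟩ := hnil
    have hpow : ∀ k : ℕ, e ^ (k + 1) = e := by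
      intro k
      induction k with
      | zero => simp
      | succ k ih => rw [pow_succ, ih, he]
    rcases Nat.eq_zero_or_pos m with h0 | hpos
    · rw [h0, pow_zero] at hm
      exact absurd hm one_ne_zero
    · obtain ⟨k, rfl⟩ := Nat.exists_eq_succ_of_ne_zero hpos.ne'
      rw [hpow] at hm
      exact hm

/-- Let each `R i` be a nontrivial commutative ring which is a D-ring and a total
ring of fractions, and let `θ` be an automorphism of the multiplicative monoid of
the direct product. Then for each `r` there exist indices `c`, `d` with
`(θ⁻¹)_{c r}(0) = 0`, `θ_{r c}(0) = 0`, `θ_{d r}(0) = 0` and `(θ⁻¹)_{r d}(0) = 0`. -/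
theorem stmt_14 {n : ℕ} {R : Fin n → Type*} [∀ i, CommRing (R i)]
    [∀ i, Nontrivial (R i)]
    (hD : ∀ i, ∀ z : R i, (∃ t : R i, t ≠ 0 ∧ z * t = 0) → IsNilpotent z)
    (hT : ∀ i, ∀ a : R i, (¬ ∃ t : R i, t ≠ 0 ∧ a * t = 0) → IsUnit a)
    (θ : ((i : Fin n) → R i) ≃* ((i : Fin n) → R i)) (r : Fin n) :
    (∃ c : Fin n, θ.symm (Pi.mulSingle r (0 : R r)) c = 0 ∧
        θ (Pi.mulSingle c (0 : R c)) r = 0) ∧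
    (∃ d : Fin n, θ (Pi.mulSingle r (0 : R r)) d = 0 ∧
        θ.symm (Pi.mulSingle d (0 : R d)) r = 0) := by
  -- abbreviation: E i is mulSingle i 0
  have hEself : ∀ i : Fin n, (Pi.mulSingle i (0 : R i)) i = 0 := fun i =>
    Pi.mulSingle_eq_same i 0
  have hEother : ∀ (i j : Fin n), j ≠ i → (Pi.mulSingle i (0 : R i)) j = 1 :=
    fun i j h => Pi.mulSingle_eq_of_ne h 0
  have hEidem : ∀ i : Fin n,
      (Pi.mulSingle i (0 : R i)) * (Pi.mulSingle i (0 : R i))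
        = Pi.mulSingle i (0 : R i) := by
    intro i
    funext j
    by_cases h : j = i
    · subst h; simp [hEself]
    · simp [Pi.mul_apply, hEother i j h]
  have key : ∀ (φ : ((i : Fin n) → R i) ≃* ((i : Fin n) → R i)) (r : Fin n),
      ∃ c : Fin n, φ.symm (Pi.mulSingle r (0 : R r)) c = 0 ∧
        φ (Pi.mulSingle c (0 : R c)) r = 0 := by
    intro φ r
    set y := φ.symm (Pi.mulSingle r (0 : R r)) with hy
    -- y is idempotent coordinatewise, hence 0/1-valued
    have hyidem : y * y = y := by
      rw [hy, ← map_mul, hEidem]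
    have hy01 : ∀ i, y i = 0 ∨ y i = 1 := fun i =>
      idem01_aux (hD i) (congrFun hyidem i)
    -- y ≠ 1
    have hyne1 : y ≠ 1 := by
      intro h
      have : Pi.mulSingle r (0 : R r) = (1 : (i : Fin n) → R i) := by
        have := congrArg φ h
        simpa [hy] using this
      have := congrFun this r
      rw [hEself] at this
      exact zero_ne_one this
    -- find c with y c = 0
    have : ∃ c, y c ≠ 1 := by
      by_contra h
      push_neg at h
      exact hyne1 (funext h)
    obtain ⟨c, hc1⟩ := this
    have hc0 : y c = 0 := (hy01 c).resolve_right hc1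
    refine ⟨c, hc0, ?_⟩
    -- y * E c = y
    have hyEc : y * Pi.mulSingle c (0 : R c) = y := by
      funext j
      by_cases h : j = c
      · subst h; simp [Pi.mul_apply, hEself, hc0]
      · simp [Pi.mul_apply, hEother c j h]
    -- apply φ
    have hmul : Pi.mulSingle r (0 : R r) * φ (Pi.mulSingle c (0 : R c))
        = Pi.mulSingle r (0 : R r) := by
      have := congrArg φ hyEc
      rw [map_mul, hy, MulEquiv.apply_symm_apply] at this
      exact this
    set z := φ (Pi.mulSingle c (0 : R c)) with hz
    have hzidem : z * z = z := by rw [hz, ← map_mul, hEidem]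
    have hz01 : ∀ i, z i = 0 ∨ z i = 1 := fun i =>
      idem01_aux (hD i) (congrFun hzidem i)
    have hzne1 : z ≠ 1 := by
      intro h
      have : Pi.mulSingle c (0 : R c) = (1 : (i : Fin n) → R i) := by
        have := congrArg φ.symm h
        simpa [hz] using this
      have := congrFun this c
      rw [hEself] at this
      exact zero_ne_one this
    have : ∃ s, z s ≠ 1 := by
      by_contra h
      push_neg at h
      exact hzne1 (funext h)
    obtain ⟨s, hs1⟩ := this
    have hs0 : z s = 0 := (hz01 s).resolve_right hs1
    have hsr : s = r := by
      by_contra hne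
      have := congrFun hmul s
      rw [Pi.mul_apply, hEother r s hne, one_mul, hs0] at this
      exact zero_ne_one (α := R s) this
    rw [← hsr]
    exact hs0
  refine ⟨key θ r, ?_⟩
  obtain ⟨d, h1, h2⟩ := key θ.symm r
  rw [MulEquiv.symm_symm] at h1
  exact ⟨d, h1, h2⟩
end

section
/- Let R₁, …, Rₙ be nontrivial commutative rings, each a D-ring and a total ring of fractions, whose cardinalities are pairwise distinct, and let θ be an automorphism of the multiplicative monoid R₁ × ⋯ × Rₙ with inverse θ⁻¹. Then for every index i, the diagonal components θ_{ii} and (θ⁻¹)_{ii} are nontrivial, i.e., neither is the constant map with value 1. -/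
section Aux

variable {n : ℕ} {R : Fin n → Type*} [∀ i, CommRing (R i)] [∀ i, Nontrivial (R i)]

/-- The idempotent of the product supported at `j`. -/
def e16 (R : Fin n → Type*) [∀ i, CommRing (R i)] (j : Fin n) : ∀ k, R k :=
  Pi.single j 1

lemma e16_same (j : Fin n) : e16 R j j = 1 := Pi.single_eq_same j 1

lemma e16_ne {j k : Fin n} (hk : k ≠ j) : e16 R j k = 0 := Pi.single_eq_of_ne hk 1

lemma e16_idem (j : Fin n) : e16 R j * e16 R j = e16 R j := by
  funext k
  by_cases hk : k = j
  · subst hk; rw [Pi.mul_apply, e16_same, mul_one]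
  · rw [Pi.mul_apply, e16_ne hk, mul_zero]

lemma aux_idem_16 {i : Fin n}
    (hD : ∀ z : R i, (∃ t : R i, t ≠ 0 ∧ z * t = 0) → IsNilpotent z)
    (hT : ∀ a : R i, (¬ ∃ t : R i, t ≠ 0 ∧ a * t = 0) → IsUnit a)
    {a : R i} (ha : a * a = a) : a = 0 ∨ a = 1 := by
  by_cases h : ∃ t : R i, t ≠ 0 ∧ a * t = 0
  · left
    obtain ⟨k, hk⟩ := hD a h
    have hpow : ∀ m : ℕ, a ^ (m + 1) = a := by
      intro m
      induction m with
      | zero => simp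
      | succ m ih => rw [pow_succ, ih, ha]
    match k, hk with
    | 0, hk => exact absurd (by simpa using hk) (one_ne_zero (α := R i))
    | (m+1), hk => rw [hpow] at hk; exact hk
  · exact Or.inr ((hT a h).mul_left_cancel (by rw [ha, mul_one]))

lemma aux_map_zero_16 {M : Type*} [MulZeroOneClass M] (θ : M ≃* M) : θ 0 = 0 := by
  calc θ 0 = θ (0 * θ.symm 0) := by rw [zero_mul]
    _ = θ 0 * θ (θ.symm 0) := map_mul _ _ _
    _ = θ 0 * 0 := by rw [θ.apply_symm_apply]
    _ = 0 := mul_zero _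

lemma aux_main_16
    (hD : ∀ i, ∀ z : R i, (∃ t : R i, t ≠ 0 ∧ z * t = 0) → IsNilpotent z)
    (hT : ∀ i, ∀ a : R i, (¬ ∃ t : R i, t ≠ 0 ∧ a * t = 0) → IsUnit a)
    (hcard : ∀ i j : Fin n, i ≠ j → Cardinal.mk (R i) ≠ Cardinal.mk (R j))
    (θ : ((i : Fin n) → R i) ≃* ((i : Fin n) → R i)) (i : Fin n) :
    ¬ ∀ x : R i, θ (Pi.mulSingle i x) i = 1 := by
  classical
  have hcoord : ∀ m : (k : Fin n) → R k, m * m = m → ∀ j, m j = 0 ∨ m j = 1 := by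
    intro m hm j
    exact aux_idem_16 (hD j) (hT j) (by simpa using congrFun hm j)
  have h0 : θ (0 : (k : Fin n) → R k) = 0 := aux_map_zero_16 θ
  have h0s : θ.symm (0 : (k : Fin n) → R k) = 0 := aux_map_zero_16 θ.symm
  -- θ (e16 R i) is an idempotent with coordinates 0 or 1
  have hu_idem : θ (e16 R i) * θ (e16 R i) = θ (e16 R i) := by
    rw [← map_mul, e16_idem]
  have hu_coord : ∀ k, θ (e16 R i) k = 0 ∨ θ (e16 R i) k = 1 := hcoord _ hu_idem
  have hu_ne : θ (e16 R i) ≠ 0 := by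
    intro h
    have h2 : e16 R i = 0 := θ.injective (by rw [h, h0])
    have h3 := congrFun h2 i
    rw [e16_same] at h3
    exact one_ne_zero h3
  obtain ⟨j, hj1⟩ : ∃ j, θ (e16 R i) j = 1 := by
    by_contra h
    push_neg at h
    apply hu_ne
    funext k
    rcases hu_coord k with h0' | h1'
    · exact h0'
    · exact absurd h1' (h k)
  -- θ (e16 R i) is in fact e16 R j
  have hatom : θ (e16 R i) = e16 R j := by
    funext k
    by_cases hk : k = j
    · subst hk; rw [hj1, e16_same]
    · rw [e16_ne hk]
      rcases hu_coord k with h0' | h1'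
      · exact h0'
      · exfalso
        have hg_idem : θ.symm (e16 R k) * θ.symm (e16 R k) = θ.symm (e16 R k) := by
          rw [← map_mul, e16_idem]
        have hg_coord := hcoord _ hg_idem
        have hθg : θ (θ.symm (e16 R k)) = e16 R k := θ.apply_symm_apply _
        have hprod : θ (e16 R i * θ.symm (e16 R k)) = θ (e16 R i) * e16 R k := by
          rw [map_mul, hθg]
        rcases hg_coord i with hgi | hgi
        · have h1 : e16 R i * θ.symm (e16 R k) = 0 := by
            funext m
            by_cases hm : m = i
            · subst hm; rw [Pi.mul_apply, hgi, mul_zero, Pi.zero_apply]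
            · rw [Pi.mul_apply, e16_ne hm, zero_mul, Pi.zero_apply]
          rw [h1, h0] at hprod
          have h2 := congrFun hprod.symm k
          rw [Pi.mul_apply, h1', e16_same, mul_one, Pi.zero_apply] at h2
          exact one_ne_zero h2
        · have h1 : e16 R i * θ.symm (e16 R k) = e16 R i := by
            funext m
            by_cases hm : m = i
            · subst hm; rw [Pi.mul_apply, e16_same, hgi, one_mul]
            · rw [Pi.mul_apply, e16_ne hm, zero_mul]
          rw [h1] at hprod
          have h2 := congrFun hprod j
          rw [Pi.mul_apply, e16_ne (Ne.symm hk), mul_zero, hj1] at h2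
          exact zero_ne_one h2.symm
  -- support lemmas
  have hsupp : ∀ x : R i, θ (Pi.single i x) = Pi.single j (θ (Pi.single i x) j) := by
    intro x
    have hxi : e16 R i * Pi.single i x = Pi.single i x := by
      funext m
      by_cases hm : m = i
      · subst hm; rw [Pi.mul_apply, e16_same, one_mul]
      · rw [Pi.mul_apply, e16_ne hm, zero_mul, Pi.single_eq_of_ne hm]
    have key : e16 R j * θ (Pi.single i x) = θ (Pi.single i x) := by
      rw [← hatom, ← map_mul, hxi]
    funext m
    by_cases hm : m = j
    · subst hm; rw [Pi.single_eq_same]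
    · have h2 := congrFun key m
      rw [Pi.mul_apply, e16_ne hm, zero_mul] at h2
      rw [Pi.single_eq_of_ne hm, ← h2]
  have hsymm_e : θ.symm (e16 R j) = e16 R i := by
    rw [← hatom, θ.symm_apply_apply]
  have hsupps : ∀ y : R j,
      θ.symm (Pi.single j y) = Pi.single i (θ.symm (Pi.single j y) i) := by
    intro y
    have hyj : e16 R j * Pi.single j y = Pi.single j y := by
      funext m
      by_cases hm : m = j
      · subst hm; rw [Pi.mul_apply, e16_same, one_mul]
      · rw [Pi.mul_apply, e16_ne hm, zero_mul, Pi.single_eq_of_ne hm]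
    have key : e16 R i * θ.symm (Pi.single j y) = θ.symm (Pi.single j y) := by
      rw [← hsymm_e, ← map_mul, hyj]
    funext m
    by_cases hm : m = i
    · subst hm; rw [Pi.single_eq_same]
    · have h2 := congrFun key m
      rw [Pi.mul_apply, e16_ne hm, zero_mul] at h2
      rw [Pi.single_eq_of_ne hm, ← h2]
  -- cardinality forces j = i
  have hji : j = i := by
    by_contra hne
    refine hcard i j (fun h => hne h.symm) (Cardinal.mk_congr ?_)
    exact
      { toFun := fun x => θ (Pi.single i x) j
        invFun := fun y => θ.symm (Pi.single j y) i
        left_inv := by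
          intro x
          show θ.symm (Pi.single j (θ (Pi.single i x) j)) i = x
          rw [← hsupp x, θ.symm_apply_apply, Pi.single_eq_same]
        right_inv := by
          intro y
          show θ (Pi.single i (θ.symm (Pi.single j y) i)) j = y
          rw [← hsupps y, θ.apply_symm_apply, Pi.single_eq_same] }
  rw [hji] at hatom
  -- final contradiction
  intro H
  have hsingle : ∀ x : R i, Pi.single i x = e16 R i * Pi.mulSingle i x := by
    intro x
    funext m
    by_cases hm : m = i
    · subst hm
      rw [Pi.mul_apply, e16_same, one_mul, Pi.single_eq_same, Pi.mulSingle_eq_same]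
    · rw [Pi.mul_apply, e16_ne hm, zero_mul, Pi.single_eq_of_ne hm]
  have key : ∀ x : R i, θ (Pi.single i x) = e16 R i := by
    intro x
    funext m
    by_cases hm : m = i
    · subst hm
      rw [hsingle, map_mul, hatom, Pi.mul_apply, e16_same, one_mul, H x]
    · rw [hsingle, map_mul, hatom, Pi.mul_apply, e16_ne hm, zero_mul]
  have h2 : Pi.single i (0 : R i) = Pi.single i (1 : R i) :=
    θ.injective (by rw [key 0, key 1])
  have h3 := congrFun h2 i
  rw [Pi.single_eq_same, Pi.single_eq_same] at h3
  exact one_ne_zero h3.symm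

end Aux

/-- Let each `R i` be a nontrivial commutative ring which is a D-ring and a total
ring of fractions, with pairwise distinct cardinalities, and let `θ` be an
automorphism of the multiplicative monoid of the direct product. Then the diagonal
components `θ_{ii}` and `(θ⁻¹)_{ii}` are nontrivial. -/
theorem stmt_16 {n : ℕ} {R : Fin n → Type*} [∀ i, CommRing (R i)]
    [∀ i, Nontrivial (R i)]
    (hD : ∀ i, ∀ z : R i, (∃ t : R i, t ≠ 0 ∧ z * t = 0) → IsNilpotent z)
    (hT : ∀ i, ∀ a : R i, (¬ ∃ t : R i, t ≠ 0 ∧ a * t = 0) → IsUnit a)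
    (hcard : ∀ i j : Fin n, i ≠ j → Cardinal.mk (R i) ≠ Cardinal.mk (R j))
    (θ : ((i : Fin n) → R i) ≃* ((i : Fin n) → R i)) :
    ∀ i : Fin n,
      (¬ ∀ x : R i, θ (Pi.mulSingle i x) i = 1) ∧
      (¬ ∀ x : R i, θ.symm (Pi.mulSingle i x) i = 1) := by
  intro i
  exact ⟨aux_main_16 hD hT hcard θ i, aux_main_16 hD hT hcard θ.symm i⟩
end

section
/- Let R₁, …, Rₙ be nontrivial commutative rings, each a D-ring and a total ring of fractions, whose cardinalities are pairwise distinct. Then every automorphism θ of the multiplicative monoid R₁ × ⋯ × Rₙ is diagonal: there exist automorphisms φᵢ of the multiplicative monoid (Rᵢ, ·), for i = 1, …, n, such that θ(x₁, …, xₙ) = (φ₁(x₁), …, φₙ(xₙ)) for all (x₁, …, xₙ). -/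
/-- Let each `R i` be a nontrivial commutative ring which is a D-ring and a total
ring of fractions, with pairwise distinct cardinalities. Then every automorphism of
the multiplicative monoid of the direct product is diagonal: it is induced by
automorphisms of the multiplicative monoids of the factors. -/
theorem stmt_17 {n : ℕ} {R : Fin n → Type*} [∀ i, CommRing (R i)]
    [∀ i, Nontrivial (R i)]
    (hD : ∀ i, ∀ z : R i, (∃ t : R i, t ≠ 0 ∧ z * t = 0) → IsNilpotent z)
    (hT : ∀ i, ∀ a : R i, (¬ ∃ t : R i, t ≠ 0 ∧ a * t = 0) → IsUnit a)
    (hcard : ∀ i j : Fin n, i ≠ j → Cardinal.mk (R i) ≠ Cardinal.mk (R j))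
    (θ : ((i : Fin n) → R i) ≃* ((i : Fin n) → R i)) :
    ∃ φ : (i : Fin n) → R i ≃* R i,
      ∀ x : (i : Fin n) → R i, θ x = fun i => φ i (x i) := by
  classical
  -- Each factor has only trivial idempotents.
  have idem : ∀ (i : Fin n) (a : R i), a * a = a → a = 0 ∨ a = 1 := by
    intro i a ha
    by_cases h1 : a = 1
    · exact Or.inr h1
    · left
      obtain ⟨k, hk⟩ := hD i a ⟨a - 1, sub_ne_zero.mpr h1, by linear_combination ha⟩
      cases k with
      | zero => simp at hk
      | succ k =>
        have hp : ∀ m, a ^ (m + 1) = a := by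
          intro m
          induction m with
          | zero => simp
          | succ m ih => rw [pow_succ, ih, ha]
        rw [hp k] at hk
        exact hk
  set P := (i : Fin n) → R i with hPdef
  have hθ0 : θ (0 : P) = 0 := by
    have h := map_mul θ (0 : P) (θ.symm 0)
    rw [zero_mul, MulEquiv.apply_symm_apply, mul_zero] at h
    exact h
  have hθ0' : θ.symm (0 : P) = 0 := by
    conv_lhs => rw [← hθ0]
    exact θ.symm_apply_apply 0
  have hzo : ∀ x : P, x * x = x → ∀ j, θ x j = 0 ∨ θ x j = 1 := by
    intro x hx j
    apply idem j
    have h : θ x * θ x = θ x := by rw [← map_mul, hx]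
    rw [← Pi.mul_apply (θ x) (θ x) j, h]
  -- coordinate idempotents
  set e : Fin n → P := fun i j => if j = i then 1 else 0 with hedef
  have he_self : ∀ i, e i * e i = e i := by
    intro i; funext j; rw [Pi.mul_apply]
    by_cases hj : j = i <;> simp [hedef, hj]
  have he_ne : ∀ i i', i ≠ i' → e i * e i' = 0 := by
    intro i i' h; funext j; rw [Pi.mul_apply, Pi.zero_apply]
    by_cases hj : j = i
    · subst hj
      simp [hedef, h]
    · simp [hedef, hj]
  have he_ne_zero : ∀ i, e i ≠ (0 : P) := by
    intro i h
    have h' := congrFun h i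
    rw [Pi.zero_apply] at h'
    simp [hedef] at h'
  have hc0 : ∀ i, ∃ j, θ (e i) j = 1 := by
    intro i
    by_contra h
    push_neg at h
    have hz : θ (e i) = 0 := by
      funext j
      rw [Pi.zero_apply]
      rcases hzo (e i) (he_self i) j with h0 | h1
      · exact h0
      · exact absurd h1 (h j)
    rw [← hθ0] at hz
    exact he_ne_zero i (θ.injective hz)
  choose c hc using hc0
  have hdisj : ∀ i i', i ≠ i' → θ (e i') (c i) = 0 := by
    intro i i' h
    have h1 : θ (e i) * θ (e i') = 0 := by
      rw [← map_mul, he_ne i i' h, hθ0]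
    have h2 := congrFun h1 (c i)
    rw [Pi.mul_apply, Pi.zero_apply, hc i, one_mul] at h2
    exact h2
  have cinj : Function.Injective c := by
    intro i i' h
    by_contra hne
    have h0 := hdisj i i' hne
    rw [h, hc i'] at h0
    exact one_ne_zero h0
  have csurj : Function.Surjective c := Finite.surjective_of_injective cinj
  have hsingle : ∀ i j, θ (e i) j = 1 → j = c i := by
    intro i j hj
    obtain ⟨i', rfl⟩ := csurj j
    by_contra hne
    have hii : i' ≠ i := by rintro rfl; exact hne rfl
    rw [hdisj i' i hii] at hj
    exact one_ne_zero hj.symm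
  have hEc : ∀ i, θ (e i) = e (c i) := by
    intro i; funext j
    by_cases hj : j = c i
    · subst hj; rw [hc i]; simp [hedef]
    · rcases hzo (e i) (he_self i) j with h0 | h1
      · rw [h0]; simp [hedef, hj]
      · exact absurd (hsingle i j h1) hj
  -- cardinality argument: c = id
  have hci : ∀ i, c i = i := by
    intro i
    by_contra hne
    apply hcard i (c i) (fun h => hne h.symm)
    have E1 : ∀ k : Fin n, {x : P // x * e k = x} ≃ R k := by
      intro k
      refine ⟨fun x => x.1 k, fun a => ⟨Function.update (0 : P) k a, ?_⟩, ?_, ?_⟩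
      · funext j
        rw [Pi.mul_apply]
        by_cases hj : j = k
        · subst hj; simp [hedef]
        · rw [Function.update_of_ne hj, Pi.zero_apply, zero_mul]
      · intro x
        apply Subtype.ext
        funext j
        by_cases hj : j = k
        · subst hj; simp
        · have hx := congrFun x.2 j
          rw [Pi.mul_apply] at hx
          simp only [hedef] at hx
          rw [if_neg hj, mul_zero] at hx
          show (Function.update (0 : P) k (x.1 k)) j = x.1 j
          rw [Function.update_of_ne hj, Pi.zero_apply]
          exact hx
      · intro a; simp
    have E2 : {x : P // x * e i = x} ≃ {x : P // x * e (c i) = x} := by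
      refine ⟨fun x => ⟨θ x.1, ?_⟩, fun y => ⟨θ.symm y.1, ?_⟩, ?_, ?_⟩
      · rw [← hEc, ← map_mul, x.2]
      · apply θ.injective
        rw [map_mul, MulEquiv.apply_symm_apply, hEc, y.2]
      · intro x; apply Subtype.ext; simp
      · intro y; apply Subtype.ext; simp
    exact Cardinal.mk_congr ((E1 i).symm.trans (E2.trans (E1 (c i))))
  have hE : ∀ i, θ (e i) = e i := by
    intro i; rw [hEc, hci]
  have hE' : ∀ i, θ.symm (e i) = e i := by
    intro i; conv_lhs => rw [← hE i]
    exact θ.symm_apply_apply _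
  -- complementary idempotents
  set f : Fin n → P := fun i j => if j = i then 0 else 1 with hfdef
  have hfe : ∀ i, f i * e i = 0 := by
    intro i; funext j; rw [Pi.mul_apply, Pi.zero_apply]
    by_cases hj : j = i <;> simp [hedef, hfdef, hj]
  have hfej : ∀ i j, j ≠ i → f i * e j = e j := by
    intro i j hji; funext k; rw [Pi.mul_apply]
    by_cases hk : k = j
    · subst hk; simp [hedef, hfdef, hji]
    · simp [hedef, hk]
  have hFgen : ∀ (ψ : P ≃* P), (∀ k, ψ (e k) = e k) → (ψ 0 = 0) → ∀ i, ψ (f i) = f i := by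
    intro ψ hψe hψ0 i
    have hidem : ∀ j, ψ (f i) j = 0 ∨ ψ (f i) j = 1 := by
      intro j
      apply idem j
      have h : ψ (f i) * ψ (f i) = ψ (f i) := by
        rw [← map_mul]
        congr 1
        funext k; rw [Pi.mul_apply]
        by_cases hk : k = i <;> simp [hfdef, hk]
      rw [← Pi.mul_apply (ψ (f i)) (ψ (f i)) j, h]
    funext j
    by_cases hj : j = i
    · subst hj
      have h1 : ψ (f j) * e j = 0 := by rw [← hψe j, ← map_mul, hfe, hψ0]
      have h2 := congrFun h1 j
      rw [Pi.mul_apply, Pi.zero_apply] at h2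
      simp only [hedef, if_pos rfl, mul_one] at h2
      rw [h2]; simp [hfdef]
    · have h1 : ψ (f i) * e j = e j := by rw [← hψe j, ← map_mul, hfej i j hj, hψe]
      have h2 := congrFun h1 j
      rw [Pi.mul_apply] at h2
      simp only [hedef, if_pos rfl, mul_one] at h2
      rw [h2]; simp [hfdef, hj]
  have hF : ∀ i, θ (f i) = f i := hFgen θ hE hθ0
  have hF' : ∀ i, θ.symm (f i) = f i := hFgen θ.symm hE' hθ0'
  -- the single-coordinate embeddings
  set u : (i : Fin n) → R i → P := fun i a => Function.update (1 : P) i a with hudef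
  have huf : ∀ i a, u i a * f i = f i := by
    intro i a; funext j; rw [Pi.mul_apply]
    by_cases hj : j = i
    · subst hj; simp [hudef, hfdef]
    · show (Function.update (1 : P) i a) j * f i j = f i j
      rw [Function.update_of_ne hj, Pi.one_apply, one_mul]
  have hugen : ∀ (ψ : P ≃* P), (∀ k, ψ (f k) = f k) →
      ∀ i a j, j ≠ i → ψ (u i a) j = 1 := by
    intro ψ hψf i a j hj
    have h1 : ψ (u i a) * f i = f i := by rw [← hψf i, ← map_mul, huf, hψf]
    have h2 := congrFun h1 j
    rw [Pi.mul_apply] at h2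
    simp only [hfdef, if_neg hj, mul_one] at h2
    exact h2
  have hθueq : ∀ i a, θ (u i a) = u i (θ (u i a) i) := by
    intro i a; funext j
    by_cases hj : j = i
    · subst hj; simp [hudef]
    · rw [hugen θ hF i a j hj]
      show (1 : R j) = (Function.update (1 : P) i (θ (u i a) i)) j
      rw [Function.update_of_ne hj, Pi.one_apply]
  have hθueq' : ∀ i a, θ.symm (u i a) = u i (θ.symm (u i a) i) := by
    intro i a; funext j
    by_cases hj : j = i
    · subst hj; simp [hudef]
    · rw [hugen θ.symm hF' i a j hj]
      show (1 : R j) = (Function.update (1 : P) i (θ.symm (u i a) i)) j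
      rw [Function.update_of_ne hj, Pi.one_apply]
  have hu_mul : ∀ i (a b : R i), u i a * u i b = u i (a * b) := by
    intro i a b; funext j; rw [Pi.mul_apply]
    by_cases hj : j = i
    · subst hj; simp [hudef]
    · show (Function.update (1 : P) i a) j * (Function.update (1 : P) i b) j
          = (Function.update (1 : P) i (a * b)) j
      rw [Function.update_of_ne hj, Function.update_of_ne hj, Function.update_of_ne hj,
        Pi.one_apply, one_mul]
  refine ⟨fun i =>
    { toFun := fun a => θ (u i a) i
      invFun := fun a => θ.symm (u i a) i
      left_inv := fun a => ?_
      right_inv := fun a => ?_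
      map_mul' := fun a b => ?_ }, ?_⟩
  · show θ.symm (u i (θ (u i a) i)) i = a
    rw [← hθueq, θ.symm_apply_apply]
    simp [hudef]
  · show θ (u i (θ.symm (u i a) i)) i = a
    rw [← hθueq', θ.apply_symm_apply]
    simp [hudef]
  · show θ (u i (a * b)) i = θ (u i a) i * θ (u i b) i
    rw [← hu_mul, map_mul, Pi.mul_apply]
  · intro x
    have hx : x = ∏ i : Fin n, u i (x i) := by
      funext j
      rw [Finset.prod_apply]
      rw [Finset.prod_eq_single j (fun i _ hij => by
        show (Function.update (1 : P) i (x i)) j = 1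
        rw [Function.update_of_ne (Ne.symm hij), Pi.one_apply]) (by simp)]
      simp [hudef]
    funext j
    conv_lhs => rw [hx]
    rw [map_prod, Finset.prod_apply]
    rw [Finset.prod_eq_single j (fun i _ hij => hugen θ hF i (x i) j (Ne.symm hij))
      (by simp)]
    rfl
end

section
/- Let R₁, …, Rₙ be nontrivial commutative rings, each a D-ring and a total ring of fractions, whose cardinalities are pairwise distinct. Then the automorphism group of the multiplicative monoid of the direct product is isomorphic, as a group, to the direct product of the automorphism groups of the multiplicative monoids of the factors: Aut(R₁ × ⋯ × Rₙ, ·) ≅ Aut(R₁, ·) × ⋯ × Aut(Rₙ, ·). -/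
/-!
An idempotent `e ≠ 1` of a ring is a zero divisor (`e * (1 - e) = 0`), so in a D-ring it is
nilpotent and hence `0`: each factor `R i` has only the idempotents `0` and `1`. The minimal
nonzero idempotents of `Π i, R i` are then exactly the `Pi.single i 1`, and a multiplicative
automorphism `φ` permutes them. Multiplication by `Pi.single i 1` cuts out a copy of `R i`, and
`φ` carries it bijectively onto the copy of the factor indexed by the image, so distinct
cardinalities force `φ` to fix every `Pi.single i 1`. Then
`φ x * Pi.single i 1 = φ (x * Pi.single i 1)` shows that the `i`-th coordinate of `φ x` depends
only on `x i`, i.e. `φ` acts coordinatewise.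
-/

open Cardinal

theorem IsIdempotentElem.eq_zero_or_one_of_zeroDivisors_isNilpotent {R : Type*} [Ring R]
    (hD : ∀ z : R, (∃ t : R, t ≠ 0 ∧ z * t = 0) → IsNilpotent z) {e : R}
    (he : IsIdempotentElem e) : e = 0 ∨ e = 1 :=
  or_iff_not_imp_right.2 fun h1 => he.eq_zero_of_isNilpotent <|
    hD e ⟨1 - e, sub_ne_zero.2 (Ne.symm h1), by rw [mul_sub, mul_one, he.eq, sub_self]⟩

def IsMinimalIdempotent {M : Type*} [MonoidWithZero M] (a : M) : Prop :=
  IsIdempotentElem a ∧ a ≠ 0 ∧ ∀ f : M, IsIdempotentElem f → a * f = a ∨ a * f = 0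

theorem IsMinimalIdempotent.map {M N : Type*} [MonoidWithZero M] [MonoidWithZero N]
    {a : M} (ha : IsMinimalIdempotent a) (φ : M ≃* N) : IsMinimalIdempotent (φ a) := by
  obtain ⟨hidem, hne, hmin⟩ := ha
  refine ⟨hidem.map φ, (map_ne_zero_iff φ φ.injective).2 hne, fun f hf => ?_⟩
  rcases hmin (φ.symm f) (hf.map φ.symm) with h | h
  · left; simpa using congrArg φ h
  · right; simpa using congrArg φ h

def MulEquiv.subtypeMulRightEqSelfEquiv {M N : Type*} [Monoid M] [Monoid N] (φ : M ≃* N)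
    (a : M) : {x : M // x * a = x} ≃ {y : N // y * φ a = y} :=
  φ.toEquiv.subtypeEquiv fun x => by simp [← map_mul]

def MulAut.piCongrRightHom {ι : Type*} (M : ι → Type*) [∀ i, Mul (M i)] :
    (∀ i, MulAut (M i)) →* MulAut (∀ i, M i) where
  toFun := MulEquiv.piCongrRight
  map_one' := rfl
  map_mul' _ _ := rfl

theorem MulAut.piCongrRightHom_injective {ι : Type*} [DecidableEq ι] (M : ι → Type*)
    [∀ i, MulOneClass (M i)] : Function.Injective (MulAut.piCongrRightHom M) := by
  intro f g h
  funext i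
  ext x
  change MulEquiv.piCongrRight f = MulEquiv.piCongrRight g at h
  simpa using congrFun (DFunLike.congr_fun h (Pi.mulSingle i x)) i

namespace Pi

variable {ι : Type*} [DecidableEq ι] {R : ι → Type*} [∀ i, MonoidWithZero (R i)]

theorem mul_single_one (x : ∀ i, R i) (i : ι) : x * single i 1 = single i (x i) := by
  rw [← single_mul_right, mul_one]

theorem single_one_mul (x : ∀ i, R i) (i : ι) : single i 1 * x = single i (x i) := by
  rw [← single_mul_left, one_mul]

theorem isIdempotentElem_single_one (i : ι) : IsIdempotentElem (single i (1 : R i)) := by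
  simp [IsIdempotentElem, ← single_mul]

theorem isMinimalIdempotent_single_one [∀ i, Nontrivial (R i)]
    (hR : ∀ i (e : R i), IsIdempotentElem e → e = 0 ∨ e = 1) (i : ι) :
    IsMinimalIdempotent (single i (1 : R i)) := by
  refine ⟨isIdempotentElem_single_one i, by simp, fun f hf => ?_⟩
  rw [single_one_mul]
  rcases hR i (f i) (hf.map (evalMonoidHom R i)) with h | h
  · right; rw [h, single_zero]
  · left; rw [h]

theorem exists_eq_single_one_of_isMinimalIdempotent
    (hR : ∀ i (e : R i), IsIdempotentElem e → e = 0 ∨ e = 1) {a : ∀ i, R i}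
    (ha : IsMinimalIdempotent a) : ∃ i, a = single i 1 := by
  obtain ⟨hidem, hne, hmin⟩ := ha
  obtain ⟨i, hi⟩ := Function.ne_iff.1 hne
  have hai : a i = 1 := (hR i (a i) (hidem.map (evalMonoidHom R i))).resolve_left hi
  refine ⟨i, ?_⟩
  rcases hmin _ (isIdempotentElem_single_one i) with h | h
  · rw [← h, mul_single_one, hai]
  · rw [mul_single_one, single_eq_zero_iff] at h
    exact absurd h hi

def subtypeMulSingleOneEquiv (i : ι) : {x : ∀ j, R j // x * single i 1 = x} ≃ R i where
  toFun x := x.1 i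
  invFun y := ⟨single i y, by rw [mul_single_one, single_eq_same]⟩
  left_inv x := Subtype.ext <| by
    change single i (x.1 i) = x.1
    rw [← mul_single_one, x.2]
  right_inv y := single_eq_same i y

theorem mulAut_apply_single_one [∀ i, Nontrivial (R i)]
    (hR : ∀ i (e : R i), IsIdempotentElem e → e = 0 ∨ e = 1)
    (hcard : Function.Injective fun i => #(R i)) (φ : MulAut (∀ i, R i)) (i : ι) :
    φ (single i 1) = single i 1 := by
  obtain ⟨j, hj⟩ :=
    exists_eq_single_one_of_isMinimalIdempotent hR ((isMinimalIdempotent_single_one hR i).map φ)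
  obtain rfl : i = j := hcard <| mk_congr <|
    (subtypeMulSingleOneEquiv i).symm.trans <| (φ.subtypeMulRightEqSelfEquiv _).trans <|
      (Equiv.subtypeEquivRight fun y => by rw [hj]).trans (subtypeMulSingleOneEquiv j)
  exact hj

theorem mulAut_apply_eq_apply_single {φ : MulAut (∀ i, R i)}
    (hφ : ∀ i, φ (single i 1) = single i 1) (x : ∀ i, R i) (i : ι) :
    φ x i = φ (single i (x i)) i := by
  have h : φ x * single i 1 = φ (single i (x i)) := by rw [← hφ, ← map_mul, mul_single_one]
  rw [← h, mul_single_one, single_eq_same]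

theorem exists_piCongrRight_eq {φ : MulAut (∀ i, R i)}
    (hφ : ∀ i, φ (single i 1) = single i 1) :
    ∃ f : ∀ i, MulAut (R i), MulEquiv.piCongrRight f = φ := by
  have hφsymm : ∀ i, φ.symm (single i 1) = single i 1 := fun i =>
    φ.symm_apply_eq.2 (hφ i).symm
  refine ⟨fun i => ⟨⟨fun y => φ (single i y) i, fun y => φ.symm (single i y) i, fun y => ?_,
    fun y => ?_⟩, fun y z => ?_⟩, ?_⟩
  · simp [← mulAut_apply_eq_apply_single hφsymm]
  · simp [← mulAut_apply_eq_apply_single hφ]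
  · simp [single_mul]
  · ext x i
    exact (mulAut_apply_eq_apply_single hφ x i).symm

end Pi

theorem stmt_18_general {n : ℕ} {R : Fin n → Type*} [∀ i, CommRing (R i)]
    [∀ i, Nontrivial (R i)]
    (hD : ∀ i, ∀ z : R i, (∃ t : R i, t ≠ 0 ∧ z * t = 0) → IsNilpotent z)
    (hcard : ∀ i j : Fin n, i ≠ j → Cardinal.mk (R i) ≠ Cardinal.mk (R j)) :
    Nonempty (MulAut ((i : Fin n) → R i) ≃* ((i : Fin n) → MulAut (R i))) := by
  have hR : ∀ i (e : R i), IsIdempotentElem e → e = 0 ∨ e = 1 := fun i _ he =>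
    he.eq_zero_or_one_of_zeroDivisors_isNilpotent (hD i)
  have hinj : Function.Injective fun i => #(R i) := fun i j h =>
    of_not_not fun hij => hcard i j hij h
  have hsurj : Function.Surjective (MulAut.piCongrRightHom R) := fun φ =>
    Pi.exists_piCongrRight_eq (Pi.mulAut_apply_single_one hR hinj φ)
  exact ⟨(MulEquiv.ofBijective _ ⟨MulAut.piCongrRightHom_injective R, hsurj⟩).symm⟩

/-- Let each `R i` be a nontrivial commutative ring which is a D-ring and a total
ring of fractions, with pairwise distinct cardinalities. Then the automorphism
group of the multiplicative monoid of the direct product is isomorphic to the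
direct product of the automorphism groups of the factors. -/
theorem stmt_18 {n : ℕ} {R : Fin n → Type*} [∀ i, CommRing (R i)]
    [∀ i, Nontrivial (R i)]
    (hD : ∀ i, ∀ z : R i, (∃ t : R i, t ≠ 0 ∧ z * t = 0) → IsNilpotent z)
    (hT : ∀ i, ∀ a : R i, (¬ ∃ t : R i, t ≠ 0 ∧ a * t = 0) → IsUnit a)
    (hcard : ∀ i j : Fin n, i ≠ j → Cardinal.mk (R i) ≠ Cardinal.mk (R j)) :
    Nonempty (MulAut ((i : Fin n) → R i) ≃* ((i : Fin n) → MulAut (R i))) :=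
  stmt_18_general hD hcard
end

section
/- Let n be a positive integer. Then the automorphism group of the multiplicative monoid (ℤ/nℤ, ·) is isomorphic, as a group, to the direct product over the distinct primes p dividing n of the automorphism groups of the multiplicative monoids (ℤ/p^{e_p}ℤ, ·), where p^{e_p} is the exact power of p dividing n: Aut(ℤ/nℤ, ·) ≅ ∏_{p^{e_p} ∥ n} Aut(ℤ/p^{e_p}ℤ, ·). -/
/-!
By the Chinese remainder theorem `ZMod n` is the product of the monoids `ZMod (p ^ e_p)`. Every
element of `ZMod (p ^ e)` is a unit or nilpotent, so its only idempotents are `0` and `1`; hence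
the coordinate idempotents `Pi.single p 1` are exactly the minimal nonzero idempotents of the
product, and every multiplicative automorphism permutes them. An automorphism sending
`Pi.single p 1` to `Pi.single q 1` restricts to an isomorphism `ZMod (p ^ e_p) ≃* ZMod (q ^ e_q)`,
and comparing cardinalities gives `p = q`. So every automorphism acts factorwise.
-/

section PiSingle

variable {ι : Type*} [DecidableEq ι] {M : ι → Type*} [∀ i, MonoidWithZero (M i)]

theorem Pi.mul_single_one_s19 (x : ∀ i, M i) (i : ι) : x * Pi.single i 1 = Pi.single i (x i) := by
  rw [← Pi.single_mul_right, mul_one]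

theorem Pi.eq_single_of_mul_single_one {x : ∀ i, M i} {i : ι} (h : x * Pi.single i 1 = x) :
    x = Pi.single i (x i) :=
  h.symm.trans (Pi.mul_single_one_s19 x i)

theorem Pi.isIdempotentElem_single_one_s19 (i : ι) : IsIdempotentElem (Pi.single i (1 : M i)) := by
  rw [IsIdempotentElem, ← Pi.single_mul, mul_one]

theorem Pi.eq_single_one_of_isIdempotentElem
    (hidem : ∀ i (x : M i), IsIdempotentElem x → x = 0 ∨ x = 1) {f : ∀ i, M i}
    (hf : IsIdempotentElem f) (hf0 : f ≠ 0) {i : ι} (hi : f * Pi.single i 1 = f) :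
    f = Pi.single i 1 := by
  have hfi : f = Pi.single i (f i) := Pi.eq_single_of_mul_single_one hi
  rcases hidem i (f i) (congrFun hf i) with h | h
  · exact absurd (hfi.trans (by rw [h, Pi.single_zero])) hf0
  · rwa [h] at hfi

/-- The coordinate idempotents are the minimal nonzero idempotents. -/
theorem MulAut.exists_apply_single_one
    (hidem : ∀ i (x : M i), IsIdempotentElem x → x = 0 ∨ x = 1)
    (φ : MulAut (∀ i, M i)) (i : ι) : ∃ j, φ (Pi.single i 1) = Pi.single j 1 := by
  by_cases hi0 : Pi.single i (1 : M i) = 0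
  · exact ⟨i, by rw [hi0, map_zero]⟩
  set f := φ (Pi.single i 1) with hf_def
  have hf : IsIdempotentElem f := (Pi.isIdempotentElem_single_one_s19 i).map φ
  have hf0 : f ≠ 0 := (map_ne_zero_iff φ φ.injective).mpr hi0
  obtain ⟨j, hj0⟩ := Function.ne_iff.mp hf0
  have hj : f j = 1 := (hidem j (f j) (congrFun hf j)).resolve_left hj0
  have hjf : Pi.single j 1 * f = Pi.single j 1 := by rw [← Pi.single_mul_left, hj, mul_one]
  refine ⟨j, (φ.symm_apply_eq.mp ?_).symm⟩
  apply Pi.eq_single_one_of_isIdempotentElem hidem ((Pi.isIdempotentElem_single_one_s19 j).map _)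
  · rw [Ne, map_eq_zero_iff _ φ.symm.injective, Pi.single_eq_zero_iff, ← hj]
    exact hj0
  · rw [← φ.symm_apply_apply (Pi.single i 1), ← map_mul, ← hf_def, hjf]

variable {κ : Type*} [DecidableEq κ] {N : κ → Type*} [∀ j, MonoidWithZero (N j)]

theorem MulEquiv.apply_single_of_apply_single_one (φ : (∀ i, M i) ≃* ∀ j, N j)
    {i : ι} {j : κ} (h : φ (Pi.single i 1) = Pi.single j 1) (x : M i) :
    φ (Pi.single i x) = Pi.single j (φ (Pi.single i x) j) := by
  apply Pi.eq_single_of_mul_single_one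
  rw [← h, ← map_mul, ← Pi.single_mul, mul_one]

def MulEquiv.piComponent (φ : (∀ i, M i) ≃* ∀ j, N j) {i : ι} {j : κ}
    (h : φ (Pi.single i 1) = Pi.single j 1) : M i ≃* N j where
  toFun x := φ (Pi.single i x) j
  invFun y := φ.symm (Pi.single j y) i
  left_inv x := by
    dsimp only
    rw [← φ.apply_single_of_apply_single_one h, φ.symm_apply_apply, Pi.single_eq_same]
  right_inv y := by
    have h' : φ.symm (Pi.single j 1) = Pi.single i 1 := φ.symm_apply_eq.mpr h.symm
    dsimp only
    rw [← φ.symm.apply_single_of_apply_single_one h', φ.apply_symm_apply, Pi.single_eq_same]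
  map_mul' x y := by simp only [Pi.single_mul, map_mul, Pi.mul_apply]

theorem MulAut.apply_single_one
    (hidem : ∀ i (x : M i), IsIdempotentElem x → x = 0 ∨ x = 1)
    (hiso : ∀ i j, Nonempty (M i ≃* M j) → i = j) (φ : MulAut (∀ i, M i)) (i : ι) :
    φ (Pi.single i 1) = Pi.single i 1 := by
  obtain ⟨j, h⟩ := MulAut.exists_apply_single_one hidem φ i
  obtain rfl := hiso i j ⟨φ.piComponent h⟩
  exact h

def MulAut.piEquiv (hidem : ∀ i (x : M i), IsIdempotentElem x → x = 0 ∨ x = 1)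
    (hiso : ∀ i j, Nonempty (M i ≃* M j) → i = j) :
    MulAut (∀ i, M i) ≃* ∀ i, MulAut (M i) where
  toFun φ i := φ.piComponent (φ.apply_single_one hidem hiso i)
  invFun := MulEquiv.piCongrRight
  left_inv φ := by
    refine MulEquiv.ext fun x => funext fun i => ?_
    change φ (Pi.single i (x i)) i = φ x i
    rw [← Pi.mul_single_one_s19, map_mul, φ.apply_single_one hidem hiso i, Pi.mul_apply,
      Pi.single_eq_same, mul_one]
  right_inv g := by
    refine funext fun i => MulEquiv.ext fun x => ?_
    change MulEquiv.piCongrRight g (Pi.single i x) i = g i x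
    simp
  map_mul' φ ψ := by
    refine funext fun i => MulEquiv.ext fun x => ?_
    change φ (ψ (Pi.single i x)) i = φ (Pi.single i (ψ (Pi.single i x) i)) i
    rw [← ψ.apply_single_of_apply_single_one (ψ.apply_single_one hidem hiso i)]

end PiSingle

def MulEquiv.mulAutCongr {A B : Type*} [Monoid A] [Monoid B] (e : A ≃* B) :
    MulAut A ≃* MulAut B where
  toFun f := (e.symm.trans f).trans e
  invFun g := (e.trans g).trans e.symm
  left_inv _ := by ext; simp
  right_inv _ := by ext; simp
  map_mul' _ _ := by ext; simp [MulAut.mul_apply]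

theorem ZMod.isUnit_or_isNilpotent_of_prime_pow {p : ℕ} (hp : p.Prime) (d : ℕ)
    (x : ZMod (p ^ d)) : IsUnit x ∨ IsNilpotent x := by
  have : NeZero (p ^ d) := ⟨pow_ne_zero d hp.ne_zero⟩
  rw [← ZMod.natCast_zmod_val x]
  by_cases hpx : p ∣ x.val
  · refine Or.inr ⟨d, ?_⟩
    rw [← Nat.cast_pow, ZMod.natCast_eq_zero_iff]
    exact pow_dvd_pow_of_dvd hpx d
  · rw [ZMod.isUnit_iff_coprime]
    exact Or.inl ((hp.coprime_iff_not_dvd.mpr hpx).pow_left d).symm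

theorem ZMod.eq_zero_or_one_of_isIdempotentElem {p : ℕ} (hp : p.Prime) {d : ℕ}
    {x : ZMod (p ^ d)} (hx : IsIdempotentElem x) : x = 0 ∨ x = 1 := by
  rcases ZMod.isUnit_or_isNilpotent_of_prime_pow hp d x with hu | hn
  · exact Or.inr ((IsIdempotentElem.iff_eq_one_of_isUnit hu).mp hx)
  · exact Or.inl (hx.eq_zero_of_isNilpotent hn)

theorem ZMod.prime_eq_of_mulEquiv {p q a b : ℕ} (hp : p.Prime) (hq : q.Prime) (ha : a ≠ 0)
    (hb : b ≠ 0) (e : ZMod (p ^ a) ≃* ZMod (q ^ b)) : p = q := by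
  have hcard := Nat.card_congr e.toEquiv
  rw [Nat.card_zmod, Nat.card_zmod] at hcard
  exact (hp.pow_inj' hq ha hb hcard).1

/-- For a positive integer `n`, the automorphism group of the multiplicative monoid
`(ℤ/nℤ, ·)` is isomorphic to the direct product, over the primes `p` dividing `n`,
of the automorphism groups of the multiplicative monoids `(ℤ/p^{e_p}ℤ, ·)`,
where `e_p` is the multiplicity of `p` in `n`. -/
theorem stmt_19 (n : ℕ) (hn : 0 < n) :
    Nonempty (MulAut (ZMod n) ≃*
      ((p : n.primeFactors) → MulAut (ZMod ((p : ℕ) ^ n.factorization (p : ℕ))))) := by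
  have hprime (p : n.primeFactors) : (p : ℕ).Prime := Nat.prime_of_mem_primeFactors p.2
  have hexp (p : n.primeFactors) : n.factorization p ≠ 0 := Finsupp.mem_support_iff.mp p.2
  have hidem (p : n.primeFactors) (x : ZMod ((p : ℕ) ^ n.factorization p)) :
      IsIdempotentElem x → x = 0 ∨ x = 1 :=
    ZMod.eq_zero_or_one_of_isIdempotentElem (hprime p)
  have hiso (p q : n.primeFactors) :
      Nonempty (ZMod ((p : ℕ) ^ n.factorization p) ≃* ZMod ((q : ℕ) ^ n.factorization q)) →
        p = q :=
    fun ⟨e⟩ => Subtype.ext (ZMod.prime_eq_of_mulEquiv (hprime p) (hprime q) (hexp p) (hexp q) e)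
  exact ⟨(ZMod.equivPi n hn.ne').toMulEquiv.mulAutCongr.trans (MulAut.piEquiv hidem hiso)⟩
end
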